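/- Let K ≥ 1, let ρ ∈ (K/2, K] be real, let φ be a strictly decreasing function on the positive integers with φ(N) → 0, and let X be a (ρ,φ)-regular configuration. Let N be a positive integer with φ(N) < ρ − K/2. Then for every integer t with 4t ≥ (N+1)², the dual configuration (T^t X)* is free; equivalently, (T^t X)(x) + (T^t X)(x+1) ≥ K for every x ∈ ℤ. -/

import Mathlib

/-- A configuration on the `K`-lane road: at most `K` particles per site. -/
def IsConf (K : ℤ) (X : ℤ → ℤ) : Prop := ∀ x, 0 ≤ X x ∧ X x ≤ K

/-- The traffic map `T`. -/
def Tmap (K : ℤ) (X : ℤ → ℤ) : ℤ → ℤ := fun x =>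
  X x + min (X (x - 1)) (K - X x) - min (X x) (K - X (x + 1))

/-- A configuration is free if `X(x) + X(x+1) ≤ K` for all `x`. -/
def IsFree (K : ℤ) (X : ℤ → ℤ) : Prop := ∀ x, X x + X (x + 1) ≤ K

/-- The number of particles `m(X,a,b) = Σ_{x=a}^{b} X(x)`. -/
noncomputable def msum (X : ℤ → ℤ) (a b : ℤ) : ℤ := ∑ x ∈ Finset.Icc a b, X x

/-- `X` is `(ρ,φ)`-regular: every window of length `N` has particle density
within `φ(N)` of `ρ`. -/
def IsRegularConf (ρ : ℝ) (φ : ℕ → ℝ) (X : ℤ → ℤ) : Prop :=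
  ∀ (n : ℤ) (N : ℕ), 1 ≤ N → |(msum X (n + 1) (n + N) : ℝ) / N - ρ| ≤ φ N

/-- The dual configuration `X*(x) = K - X(x)`, describing empty places. -/
def dualConf (K : ℤ) (X : ℤ → ℤ) : ℤ → ℤ := fun x => K - X x

/-! Write `Tᵗ Y x = Y x + F t (x - 1) - F t x`, where `F t x` is the flux across the bond
`(x, x + 1)`. The flux obeys a min-plus recursion, whose solution is the minimum over `j ≤ t` of
explicit costs built from a discrete primitive of `Y`. If every window of length at least `N`
carries fewer than `K/2` particles per site, the cost with `j = 0` is beaten by the one with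
`j ≈ N/2`, and this forces `Tᵗ Y x + Tᵗ Y (x + 1) ≤ K` once `2t ≥ N + 1`. A regular
configuration of density `ρ > K/2` becomes such a configuration after exchanging particles and
holes and reflecting space, an operation that commutes with `T`. -/

open Finset

section Sums

variable (Y : ℤ → ℤ)

lemma msum_of_lt {a b : ℤ} (h : b < a) : msum Y a b = 0 := by
  rw [msum, Icc_eq_empty_of_lt h, sum_empty]

lemma msum_add_one_right {a b : ℤ} (h : a ≤ b + 1) :
    msum Y a (b + 1) = msum Y a b + Y (b + 1) := by
  rw [msum, msum, ← insert_Icc_right_eq_Icc_add_one h, sum_insert (by simp), add_comm]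

lemma msum_comp_neg (a b : ℤ) : msum (fun y => Y (-y)) a b = msum Y (-b) (-a) :=
  sum_nbij' (fun y => -y) (fun y => -y) (by simp; omega) (by simp; omega) (by simp) (by simp)
    (by simp)

lemma msum_dualConf (K : ℤ) {a b : ℤ} (h : a ≤ b + 1) :
    msum (dualConf K Y) a b = (b + 1 - a) * K - msum Y a b := by
  simp only [msum, dualConf]
  rw [sum_sub_distrib, sum_const, Int.card_Icc, nsmul_eq_mul,
    Int.toNat_of_nonneg (by omega)]

noncomputable def cumsum (x : ℤ) : ℤ := ∑ y ∈ Ioc 0 x, Y y - ∑ y ∈ Ioc x 0, Y y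

lemma cumsum_eq_cumsum_sub_one_add (x : ℤ) : cumsum Y x = cumsum Y (x - 1) + Y x := by
  rcases le_or_gt x 0 with hx | hx
  · rw [cumsum, cumsum, Ioc_eq_empty_of_le hx, Ioc_eq_empty_of_le (show x - 1 ≤ 0 by omega),
      ← insert_Ioc_add_one_left_eq_Ioc (show x - 1 < 0 by omega), sub_add_cancel,
      sum_insert (by simp)]
    ring
  · obtain ⟨z, rfl⟩ : ∃ z, x = z + 1 := ⟨x - 1, by omega⟩
    rw [cumsum, cumsum, add_sub_cancel_right, Ioc_eq_empty_of_le hx.le,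
      Ioc_eq_empty_of_le (show 0 ≤ z by omega),
      ← insert_Ioc_right_eq_Ioc_add_one_of_not_isMax (show 0 ≤ z by omega) (not_isMax _),
      sum_insert (by simp)]
    ring

lemma msum_eq_cumsum_sub {a b : ℤ} (h : a ≤ b + 1) :
    msum Y a b = cumsum Y b - cumsum Y (a - 1) := by
  induction b, (show a - 1 ≤ b by omega) using Int.leInduction with
  | base => rw [msum_of_lt Y (by omega), sub_self]
  | succ b hb ih =>
    rw [msum_add_one_right Y (by omega), ih (by omega), cumsum_eq_cumsum_sub_one_add Y (b + 1),
      add_sub_cancel_right]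
    ring

end Sums

def IsSubcritical (K : ℤ) (N : ℕ) (Y : ℤ → ℤ) : Prop :=
  ∀ (n : ℤ) (L : ℕ), N ≤ L → 2 * msum Y (n + 1) (n + L) < L * K

section Flux

variable (K : ℤ) (Y : ℤ → ℤ)

/-- The number of particles that cross the bond `(x, x + 1)` during the first `t` steps of `T`
started from `Y`. -/
def flux : ℕ → ℤ → ℤ
  | 0, _ => 0
  | t + 1, x => min (flux t (x - 1) + Y x) (flux t (x + 1) + K - Y (x + 1))

lemma iterate_Tmap_eq_flux (t : ℕ) (x : ℤ) :
    (Tmap K)^[t] Y x = Y x + flux K Y t (x - 1) - flux K Y t x := by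
  induction t generalizing x with
  | zero => simp [flux]
  | succ t ih =>
    rw [Function.iterate_succ_apply', Tmap, ih, ih, ih, flux, flux, sub_add_cancel,
      add_sub_cancel_right]
    omega

/-- The cost of the `t`-step path with `j` left moves in the min-plus expansion of `flux`. -/
noncomputable def fluxCandidate (t : ℕ) (x : ℤ) (j : ℕ) : ℤ :=
  cumsum Y x - cumsum Y (x + t - 2 * j) + ((t : ℤ) - j) * K

lemma fluxCandidate_succ_add_one (t : ℕ) (x : ℤ) (j : ℕ) :
    fluxCandidate K Y (t + 1) x (j + 1) = fluxCandidate K Y t (x - 1) j + Y x := by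
  rw [fluxCandidate, fluxCandidate, cumsum_eq_cumsum_sub_one_add Y x]
  push_cast
  rw [show x + (t + 1) - 2 * (j + 1) = x - 1 + t - 2 * j by ring]
  ring

lemma fluxCandidate_succ (t : ℕ) (x : ℤ) (j : ℕ) :
    fluxCandidate K Y (t + 1) x j = fluxCandidate K Y t (x + 1) j + K - Y (x + 1) := by
  rw [fluxCandidate, fluxCandidate, cumsum_eq_cumsum_sub_one_add Y (x + 1), add_sub_cancel_right]
  push_cast
  rw [show x + (t + 1) - 2 * j = x + 1 + t - 2 * j by ring]
  ring

lemma flux_le_fluxCandidate {t : ℕ} (x : ℤ) {j : ℕ} (hj : j ≤ t) :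
    flux K Y t x ≤ fluxCandidate K Y t x j := by
  induction t generalizing x j with
  | zero => simp [Nat.le_zero.1 hj, flux, fluxCandidate]
  | succ t ih =>
    rcases j with _ | j
    · rw [fluxCandidate_succ, flux]
      exact (min_le_right _ _).trans (by linarith [ih (x + 1) (Nat.zero_le t)])
    · rw [fluxCandidate_succ_add_one, flux]
      exact (min_le_left _ _).trans (by linarith [ih (x - 1) (Nat.le_of_succ_le_succ hj)])

lemma exists_flux_eq_fluxCandidate (t : ℕ) (x : ℤ) :
    ∃ j ≤ t, flux K Y t x = fluxCandidate K Y t x j := by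
  induction t generalizing x with
  | zero => exact ⟨0, le_rfl, by simp [flux, fluxCandidate]⟩
  | succ t ih =>
    rcases le_total (flux K Y t (x - 1) + Y x) (flux K Y t (x + 1) + K - Y (x + 1)) with h | h
    · obtain ⟨j, hjt, hj⟩ := ih (x - 1)
      exact ⟨j + 1, by omega, by rw [flux, min_eq_left h, fluxCandidate_succ_add_one, hj]⟩
    · obtain ⟨j, hjt, hj⟩ := ih (x + 1)
      exact ⟨j, by omega, by rw [flux, min_eq_right h, fluxCandidate_succ, hj]⟩

lemma fluxCandidate_zero_sub (t : ℕ) (x : ℤ) (j : ℕ) :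
    fluxCandidate K Y t x 0 - fluxCandidate K Y t x j =
      j * K - msum Y (x + t + 1 - 2 * j) (x + t) := by
  rw [msum_eq_cumsum_sub Y (by omega), fluxCandidate, fluxCandidate,
    show x + t + 1 - 2 * (j : ℤ) - 1 = x + t - 2 * j by ring, Nat.cast_zero, mul_zero, sub_zero,
    sub_zero]
  ring

variable {K Y} {N : ℕ}

lemma flux_lt_fluxCandidate_zero (hY : IsSubcritical K N Y) {t : ℕ} (ht : N + 1 ≤ 2 * t)
    (x : ℤ) :
    flux K Y t x < fluxCandidate K Y t x 0 := by
  obtain ⟨j, hjN, hjt⟩ : ∃ j : ℕ, N ≤ 2 * j ∧ j ≤ t :=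
    ⟨(N + 1) / 2, by omega, by omega⟩
  have hwindow := hY (x + t - 2 * j) (2 * j) hjN
  rw [show x + t - 2 * j + 1 = x + t + 1 - 2 * j by ring, Nat.cast_mul, Nat.cast_two,
    sub_add_cancel] at hwindow
  linarith [flux_le_fluxCandidate K Y x hjt, fluxCandidate_zero_sub K Y t x j]

theorem IsSubcritical.isFree_iterate_Tmap (hY : IsSubcritical K N Y) {t : ℕ}
    (ht : N + 1 ≤ 2 * t) :
    IsFree K ((Tmap K)^[t] Y) := by
  intro x
  rw [iterate_Tmap_eq_flux, iterate_Tmap_eq_flux, add_sub_cancel_right]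
  obtain ⟨j, hjt, hj⟩ := exists_flux_eq_fluxCandidate K Y t (x + 1)
  obtain ⟨j, rfl⟩ : ∃ j', j = j' + 1 := Nat.exists_eq_add_one_of_ne_zero (by
    rintro rfl
    exact (flux_lt_fluxCandidate_zero hY ht (x + 1)).ne hj)
  linarith [flux_le_fluxCandidate K Y (t := t) (x - 1) (j := j) (by omega),
    fluxCandidate_succ_add_one K Y t x j, fluxCandidate_succ K Y t x (j + 1)]

end Flux

section Duality

variable (K : ℤ)

lemma Tmap_dualConf_neg (X : ℤ → ℤ) :
    Tmap K (dualConf K fun y => X (-y)) = dualConf K fun y => Tmap K X (-y) := by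
  funext x
  simp only [Tmap, dualConf]
  rw [show -(x - 1) = -x + 1 by ring, show -(x + 1) = -x - 1 by ring]
  omega

lemma iterate_Tmap_dualConf_neg (t : ℕ) (X : ℤ → ℤ) :
    (Tmap K)^[t] (dualConf K fun y => X (-y)) = dualConf K fun y => (Tmap K)^[t] X (-y) :=
  ((Function.Commute.iterate_right (f := fun X => dualConf K fun y => X (-y))
    (fun X => (Tmap_dualConf_neg K X).symm) t) X).symm

lemma IsFree.of_comp_neg {Z : ℤ → ℤ} (hZ : IsFree K fun y => Z (-y)) : IsFree K Z := by
  intro x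
  have : Z (-(-x - 1)) + Z (- -x) ≤ K := by simpa only [sub_add_cancel] using hZ (-x - 1)
  rw [show -(-x - 1) = x + 1 by ring, neg_neg] at this
  omega

lemma isFree_dualConf_iff (Z : ℤ → ℤ) :
    IsFree K (dualConf K Z) ↔ ∀ x, K ≤ Z x + Z (x + 1) :=
  forall_congr' fun x => by simp only [dualConf]; omega

end Duality

lemma IsRegularConf.lt_two_mul_msum {K : ℤ} {ρ : ℝ} {φ : ℕ → ℝ} {X : ℤ → ℤ}
    (hreg : IsRegularConf ρ φ X) (hφ : StrictAntiOn φ (Set.Ici 1)) {N : ℕ} (hN : 1 ≤ N)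
    (hNφ : φ N < ρ - K / 2) (n : ℤ) {L : ℕ} (hL : N ≤ L) :
    (L : ℤ) * K < 2 * msum X (n + 1) (n + L) := by
  have hL0 : (0 : ℝ) < L := by exact_mod_cast hN.trans hL
  have hφL : φ L ≤ φ N := hφ.antitoneOn hN (hN.trans hL) hL
  have hρ : ρ - φ L ≤ msum X (n + 1) (n + L) / L := by
    linarith [(abs_le.1 (hreg n L (hN.trans hL))).1]
  rw [le_div_iff₀ hL0] at hρ
  have : (L : ℝ) * K < 2 * msum X (n + 1) (n + L) := by
    linarith [mul_lt_mul_of_pos_left (show (K : ℝ) / 2 < ρ - φ L by linarith) hL0]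
  exact_mod_cast this

lemma IsRegularConf.isSubcritical_dualConf_neg {K : ℤ} {ρ : ℝ} {φ : ℕ → ℝ} {X : ℤ → ℤ}
    (hreg : IsRegularConf ρ φ X) (hφ : StrictAntiOn φ (Set.Ici 1)) {N : ℕ} (hN : 1 ≤ N)
    (hNφ : φ N < ρ - K / 2) : IsSubcritical K N (dualConf K fun y => X (-y)) := by
  intro n L hL
  have := hreg.lt_two_mul_msum hφ hN hNφ (-(n + L) - 1) hL
  rw [sub_add_cancel, show -(n + L) - 1 + L = -(n + 1) by ring] at this
  rw [msum_dualConf _ K (by omega), msum_comp_neg, show n + L + 1 - (n + 1) = L by ring]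
  omega

theorem stmt_10_general (K : ℤ) (X : ℤ → ℤ)
    (ρ : ℝ) (φ : ℕ → ℝ)
    (hφanti : StrictAntiOn φ (Set.Ici 1))
    (hreg : IsRegularConf ρ φ X)
    (N : ℕ) (hN : 1 ≤ N) (hNφ : φ N < ρ - K / 2)
    (t : ℕ) (ht : (N + 1) ^ 2 ≤ 4 * t) :
    IsFree K (dualConf K ((Tmap K)^[t] X)) ∧
    (∀ x : ℤ, K ≤ (Tmap K)^[t] X x + (Tmap K)^[t] X (x + 1)) := by
  have hfree := (hreg.isSubcritical_dualConf_neg hφanti hN hNφ).isFree_iterate_Tmap (t := t)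
    (by nlinarith)
  rw [iterate_Tmap_dualConf_neg] at hfree
  have hdual : IsFree K (dualConf K ((Tmap K)^[t] X)) := hfree.of_comp_neg
  exact ⟨hdual, (isFree_dualConf_iff K _).1 hdual⟩

/-- A regular configuration with density above `K/2` becomes "dually free"
after the transient period of length `(N+1)²/4`. -/
theorem stmt_10 (K : ℤ) (hK : 1 ≤ K) (X : ℤ → ℤ) (hX : IsConf K X)
    (ρ : ℝ) (hρK2 : (K : ℝ) / 2 < ρ) (hρK : ρ ≤ K) (φ : ℕ → ℝ)
    (hφanti : StrictAntiOn φ (Set.Ici 1))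
    (hφ0 : Filter.Tendsto φ Filter.atTop (nhds 0))
    (hreg : IsRegularConf ρ φ X)
    (N : ℕ) (hN : 1 ≤ N) (hNφ : φ N < ρ - K / 2)
    (t : ℕ) (ht : (N + 1) ^ 2 ≤ 4 * t) :
    IsFree K (dualConf K ((Tmap K)^[t] X)) ∧
    (∀ x : ℤ, K ≤ (Tmap K)^[t] X x + (Tmap K)^[t] X (x + 1)) :=
  stmt_10_general K X ρ φ hφanti hreg N hN hNφ t ht
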